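/- Let α ∈ [0,1] be a real number and m ≥ 2 an integer. Then 4(1 - αm + α²m²) - (max{2 - αm, 0})² ≤ 6α²m(m-1). -/
import Mathlib


theorem stmt_0 (α : ℝ) (m : ℕ) (hα0 : 0 ≤ α) (hα1 : α ≤ 1) (hm : 2 ≤ m) :
    4 * (1 - α * m + α ^ 2 * m ^ 2) - (max (2 - α * m) 0) ^ 2
      ≤ 6 * α ^ 2 * m * (m - 1) := by
  have hm' : (2:ℝ) ≤ m := by exact_mod_cast hm
  rcases le_or_gt (α * m) 2 with h | h
  · rw [max_eq_left (by linarith)]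
    nlinarith [sq_nonneg (α * m), mul_nonneg hα0 (by linarith : (0:ℝ) ≤ m)]
  · rw [max_eq_right (by linarith)]
    have hm3 : (3:ℝ) ≤ m := by
      by_contra hc
      push_neg at hc
      have : (m:ℝ) ≤ 2 := by
        have : m ≤ 2 := by exact_mod_cast Nat.lt_succ_iff.mp (by exact_mod_cast hc)
        exact_mod_cast this
      nlinarith
    nlinarith [mul_nonneg (mul_nonneg hα0 hα0) (by linarith : (0:ℝ) ≤ m), sq_nonneg α]
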